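/- arXiv:hep-th/0601232 — 2 statements merged into one kernel-verified Lean document; each statement's English description precedes it below -/
import Mathlib

section
/- Let N_1, N_2, N_3 be integers ≥ 2, let σ be the permutation (1 3) of {1,2,3}, let (B_{i_1})_{1 ≤ i_1 ≤ N_3 N_1} be a basis of the space of N_3×N_1 complex matrices and (B_{i_3})_{1 ≤ i_3 ≤ N_1 N_3} a basis of the space of N_1×N_3 complex matrices. If the tensor commutation matrix satisfies U_{N_1⊗N_3} = Σ_{i_1=1}^{N_1 N_3} Σ_{i_3=1}^{N_1 N_3} α^{i_1 i_3} B_{i_1} ⊗ B_{i_3} for complex scalars α^{i_1 i_3}, then the σ-tensor permutation matrix satisfies U_{N_1⊗N_2⊗N_3}(σ) = Σ_{i_1=1}^{N_1 N_3} Σ_{i_3=1}^{N_1 N_3} α^{i_1 i_3} B_{i_1} ⊗ I_{N_2} ⊗ B_{i_3}, where I_{N_2} is the N_2×N_2 identity matrix. -/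
open Matrix Kronecker

/-!
Both `U_{N₁⊗N₃}` and `U_{N₁⊗N₂⊗N₃}(σ)` are permutation matrices, since their action on product
vectors pins down their columns. The linear map inserting an identity factor in the middle tensor
slot sends `A ⊗ B` to `A ⊗ I ⊗ B` and the first permutation matrix to the second, so applying it
to the expansion of `U_{N₁⊗N₃}` gives the expansion of `U_{N₁⊗N₂⊗N₃}(σ)`.
-/

variable {R : Type*} [CommSemiring R]
variable {l m n p q : Type*}

def Equiv.prodReverse (α β γ : Type*) : γ × β × α ≃ α × β × γ where
  toFun x := (x.2.2, x.2.1, x.1)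
  invFun x := (x.2.2, x.2.1, x.1)
  left_inv _ := rfl
  right_inv _ := rfl

section commutation

variable [DecidableEq l] [DecidableEq m] [DecidableEq n]

theorem Pi.single_one_mul_single_one (i : m) (j : n) :
    (fun x : m × n => (Pi.single i 1 : m → R) x.1 * (Pi.single j 1 : n → R) x.2) =
      Pi.single (i, j) 1 := by
  ext ⟨x, y⟩
  by_cases hx : x = i <;> by_cases hy : y = j <;> simp [hx, hy]

theorem eq_prodComm_toMatrix_of_mulVec [Fintype m] [Fintype n] (U : Matrix (n × m) (m × n) R)
    (hU : ∀ (a : m → R) (b : n → R),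
      U *ᵥ (fun x => a x.1 * b x.2) = fun x => b x.1 * a x.2) :
    U = (Equiv.prodComm n m).toPEquiv.toMatrix := by
  refine ext_of_mulVec_single fun ⟨i, j⟩ => ?_
  rw [PEquiv.toMatrix_toPEquiv_mulVec, ← Pi.single_one_mul_single_one, hU]
  exact funext fun _ => mul_comm _ _

theorem eq_prodReverse_toMatrix_of_mulVec [Fintype l] [Fintype m] [Fintype n]
    (U : Matrix (n × l × m) (m × l × n) R)
    (hU : ∀ (a : m → R) (b : l → R) (c : n → R),
      U *ᵥ (fun x => a x.1 * (b x.2.1 * c x.2.2)) = fun x => c x.1 * (b x.2.1 * a x.2.2)) :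
    U = (Equiv.prodReverse m l n).toPEquiv.toMatrix := by
  refine ext_of_mulVec_single fun ⟨i, j, k⟩ => ?_
  rw [PEquiv.toMatrix_toPEquiv_mulVec, ← Pi.single_one_mul_single_one,
    ← Pi.single_one_mul_single_one j k, hU]
  exact funext fun _ => by
    simp only [Function.comp_apply, Equiv.prodReverse, Equiv.coe_fn_mk]
    ring

end commutation

section insertIdentity

variable [DecidableEq l]

variable (R l) in
def insertIdentity : Matrix (n × m) (p × q) R →ₗ[R] Matrix (n × l × m) (p × l × q) R where
  toFun M := of fun i j => M (i.1, i.2.2) (j.1, j.2.2) * (1 : Matrix l l R) i.2.1 j.2.1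
  map_add' M N := by ext; simp [add_mul]
  map_smul' c M := by ext; simp [mul_assoc]

theorem insertIdentity_kronecker (A : Matrix n p R) (B : Matrix m q R) :
    insertIdentity R l (A ⊗ₖ B) = A ⊗ₖ ((1 : Matrix l l R) ⊗ₖ B) := by
  ext i j
  simp only [insertIdentity, LinearMap.coe_mk, AddHom.coe_mk, of_apply, kroneckerMap_apply]
  ring

theorem insertIdentity_prodComm_toMatrix [DecidableEq m] [DecidableEq n] :
    insertIdentity R l (Equiv.prodComm n m).toPEquiv.toMatrix =
      (Equiv.prodReverse m l n).toPEquiv.toMatrix := by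
  ext ⟨i, j, k⟩ ⟨i', j', k'⟩
  by_cases hj : j = j' <;>
    simp [hj, insertIdentity, PEquiv.toMatrix_apply, Equiv.prodReverse, one_apply]

end insertIdentity

theorem tensor_transposition_insert_identity_general (N₁ N₂ N₃ : ℕ)
    (B₁ : Module.Basis (Fin (N₃ * N₁)) ℂ (Matrix (Fin N₃) (Fin N₁) ℂ))
    (B₃ : Module.Basis (Fin (N₁ * N₃)) ℂ (Matrix (Fin N₁) (Fin N₃) ℂ))
    (α : Fin (N₃ * N₁) → Fin (N₁ * N₃) → ℂ)
    (UC : Matrix (Fin N₃ × Fin N₁) (Fin N₁ × Fin N₃) ℂ)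
    (hUC : ∀ (a : Fin N₁ → ℂ) (b : Fin N₃ → ℂ),
      UC.mulVec (fun x => a x.1 * b x.2) = fun x => b x.1 * a x.2)
    (hsum : UC = ∑ i, ∑ j, α i j • (B₁ i ⊗ₖ B₃ j))
    (UP : Matrix (Fin N₃ × Fin N₂ × Fin N₁) (Fin N₁ × Fin N₂ × Fin N₃) ℂ)
    (hUP : ∀ (a₁ : Fin N₁ → ℂ) (a₂ : Fin N₂ → ℂ) (a₃ : Fin N₃ → ℂ),
      UP.mulVec (fun x => a₁ x.1 * (a₂ x.2.1 * a₃ x.2.2)) =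
        fun x => a₃ x.1 * (a₂ x.2.1 * a₁ x.2.2)) :
    UP = ∑ i, ∑ j, α i j • (B₁ i ⊗ₖ ((1 : Matrix (Fin N₂) (Fin N₂) ℂ) ⊗ₖ B₃ j)) := by
  calc UP = (Equiv.prodReverse (Fin N₁) (Fin N₂) (Fin N₃)).toPEquiv.toMatrix :=
        eq_prodReverse_toMatrix_of_mulVec UP hUP
    _ = insertIdentity ℂ (Fin N₂) UC := by
        rw [eq_prodComm_toMatrix_of_mulVec UC hUC, insertIdentity_prodComm_toMatrix]
    _ = _ := by
        simp only [hsum, map_sum, map_smul, insertIdentity_kronecker]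

/-- Let `σ = (1 3)` on `{1,2,3}`, let `(B₁ᵢ)` be a basis of the `N₃ × N₁`
complex matrices and `(B₃ⱼ)` a basis of the `N₁ × N₃` complex matrices.  If the tensor
commutation matrix `U_{N₁⊗N₃}` (the matrix `UC` with `UC · (a ⊗ b) = b ⊗ a` for all
`a ∈ ℂ^{N₁}`, `b ∈ ℂ^{N₃}`) satisfies `UC = Σᵢⱼ α i j • (B₁ᵢ ⊗ B₃ⱼ)`, then the
`σ`-tensor permutation matrix `U_{N₁⊗N₂⊗N₃}(σ)` (the matrix `UP` with
`UP · (a₁ ⊗ a₂ ⊗ a₃) = a₃ ⊗ a₂ ⊗ a₁`) satisfies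
`UP = Σᵢⱼ α i j • (B₁ᵢ ⊗ I_{N₂} ⊗ B₃ⱼ)`. -/
theorem tensor_transposition_insert_identity (N₁ N₂ N₃ : ℕ)
    (h₁ : 2 ≤ N₁) (h₂ : 2 ≤ N₂) (h₃ : 2 ≤ N₃)
    (B₁ : Module.Basis (Fin (N₃ * N₁)) ℂ (Matrix (Fin N₃) (Fin N₁) ℂ))
    (B₃ : Module.Basis (Fin (N₁ * N₃)) ℂ (Matrix (Fin N₁) (Fin N₃) ℂ))
    (α : Fin (N₃ * N₁) → Fin (N₁ * N₃) → ℂ)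
    (UC : Matrix (Fin N₃ × Fin N₁) (Fin N₁ × Fin N₃) ℂ)
    (hUC : ∀ (a : Fin N₁ → ℂ) (b : Fin N₃ → ℂ),
      UC.mulVec (fun x => a x.1 * b x.2) = fun x => b x.1 * a x.2)
    (hsum : UC = ∑ i, ∑ j, α i j • (B₁ i ⊗ₖ B₃ j))
    (UP : Matrix (Fin N₃ × Fin N₂ × Fin N₁) (Fin N₁ × Fin N₂ × Fin N₃) ℂ)
    (hUP : ∀ (a₁ : Fin N₁ → ℂ) (a₂ : Fin N₂ → ℂ) (a₃ : Fin N₃ → ℂ),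
      UP.mulVec (fun x => a₁ x.1 * (a₂ x.2.1 * a₃ x.2.2)) =
        fun x => a₃ x.1 * (a₂ x.2.1 * a₁ x.2.2)) :
    UP = ∑ i, ∑ j, α i j • (B₁ i ⊗ₖ ((1 : Matrix (Fin N₂) (Fin N₂) ℂ) ⊗ₖ B₃ j)) :=
  tensor_transposition_insert_identity_general N₁ N₂ N₃ B₁ B₃ α UC hUC hsum UP hUP
end

section
/- Let n ≥ 2 and let Λ_1, …, Λ_{n²−1} be n×n complex matrices that are Hermitian, traceless, and satisfy Tr(Λ_a Λ_b) = 2δ_{ab} for all a, b. Then the tensor commutation matrix n ⊗ n satisfies U_{n⊗n} = (1/n) I_n ⊗ I_n + (1/2) Σ_{a=1}^{n²−1} Λ_a ⊗ Λ_a, where I_n is the n×n identity matrix and ⊗ is the Kronecker product. -/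
open Matrix Kronecker

/-!
The identity together with the `Λ_a` forms a trace-orthogonal family of `n²` matrices, hence a
basis of `Matrix (Fin n) (Fin n) ℂ`, which yields the completeness relation
`X = (1/n) tr(X) 1 + (1/2) Σ_a tr(Λ_a X) Λ_a`. Evaluating it at the matrix unit `E_{ki}` in
entry `(j, l)` gives `δ_{il} δ_{jk} = (1/n) δ_{ik} δ_{jl} + (1/2) Σ_a (Λ_a)_{ik} (Λ_a)_{jl}`,
and the two sides are the entries of `U_{n⊗n}` and of the claimed sum at `((i, j), (k, l))`.
-/

theorem Module.Dual.sum_apply_smul_eq_of_biorthogonal {K V ι : Type*} [Field K] [AddCommGroup V]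
    [Module K V] [FiniteDimensional K V] [Fintype ι] [DecidableEq ι]
    (v : ι → V) (φ : ι → Module.Dual K V) (hφ : ∀ i j, φ i (v j) = if i = j then 1 else 0)
    (hcard : Fintype.card ι = Module.finrank K V) (x : V) :
    ∑ i, φ i x • v i = x := by
  let Φ : V →ₗ[K] ι → K := LinearMap.pi φ
  have hΦ : ∀ c : ι → K, Φ (∑ j, c j • v j) = c := fun c ↦ by
    ext i
    simp [Φ, hφ]
  have hinj : Function.Injective Φ :=
    (LinearMap.injective_iff_surjective_of_finrank_eq_finrank (by simp [hcard])).2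
      fun c ↦ ⟨_, hΦ c⟩
  exact hinj (hΦ fun i ↦ φ i x)

theorem Matrix.sum_trace_mul_smul_eq_of_orthogonal {K ι m : Type*} [Field K] [Fintype ι]
    [DecidableEq ι] [Fintype m] [DecidableEq m]
    (v : ι → Matrix m m K) (c : ι → K)
    (hv : ∀ i j, c i * (v i * v j).trace = if i = j then 1 else 0)
    (hcard : Fintype.card ι = Fintype.card m ^ 2) (X : Matrix m m K) :
    ∑ i, (c i * (v i * X).trace) • v i = X :=
  Module.Dual.sum_apply_smul_eq_of_biorthogonal v
    (fun i ↦ c i • traceLinearMap m K K ∘ₗ LinearMap.mulLeft K (v i)) hv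
    (by simp [hcard, sq, Module.finrank_matrix]) X

theorem Matrix.apply_eq_ite_of_mulVec_kronecker_swap {R m : Type*} [CommSemiring R] [Fintype m]
    [DecidableEq m] (U : Matrix (m × m) (m × m) R)
    (hU : ∀ a b : m → R, U *ᵥ (fun x ↦ a x.1 * b x.2) = fun x ↦ b x.1 * a x.2) (i j k l : m) :
    U (i, j) (k, l) = if (i, j) = (l, k) then 1 else 0 := by
  have hsingle : Pi.single (k, l) (1 : R) =
      fun x : m × m ↦ (Pi.single k 1 : m → R) x.1 * (Pi.single l 1 : m → R) x.2 := by
    ext x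
    simp only [Pi.single_apply, Prod.ext_iff, ite_and, boole_mul]
  have := congrFun (hU (Pi.single k 1) (Pi.single l 1)) (i, j)
  rw [← hsingle, mulVec_single] at this
  simpa [Pi.single_apply, Prod.ext_iff, ← ite_and, and_comm] using this

section GellMann

variable {K ι m : Type*} [Field K] [CharZero K] [Fintype ι] [DecidableEq ι] [Fintype m]
  [DecidableEq m] [Nonempty m] (Λ : ι → Matrix m m K)

theorem gellMann_completeness
    (hcard : Fintype.card ι + 1 = Fintype.card m ^ 2) (htrace : ∀ a, (Λ a).trace = 0)
    (horth : ∀ a b, (Λ a * Λ b).trace = if a = b then 2 else 0) (X : Matrix m m K) :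
    ((Fintype.card m : K)⁻¹ * X.trace) • 1 + (2⁻¹ : K) • ∑ a, (Λ a * X).trace • Λ a = X := by
  have hbasis := sum_trace_mul_smul_eq_of_orthogonal (ι := Option ι) (fun i ↦ i.elim 1 Λ)
    (fun i ↦ i.elim (Fintype.card m : K)⁻¹ 2⁻¹) ?_ (by simp [hcard]) X
  · simpa [Fintype.sum_option, Finset.smul_sum, smul_smul] using hbasis
  · rintro (_ | a) (_ | b) <;> simp [htrace, horth, Fintype.card_ne_zero]

theorem gellMann_completeness_apply
    (hcard : Fintype.card ι + 1 = Fintype.card m ^ 2) (htrace : ∀ a, (Λ a).trace = 0)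
    (horth : ∀ a b, (Λ a * Λ b).trace = if a = b then 2 else 0) (i j k l : m) :
    (Fintype.card m : K)⁻¹ * ((1 : Matrix m m K) i k * (1 : Matrix m m K) j l)
      + 2⁻¹ * ∑ a, Λ a i k * Λ a j l = if (i, j) = (l, k) then 1 else 0 := by
  have htr : ∀ A : Matrix m m K, (A * single k i 1).trace = A i k := fun A ↦ by
    simp [trace_mul_single]
  have htr_single : (single k i (1 : K)).trace = (1 : Matrix m m K) i k := by
    simpa using htr 1
  have hcompl := congrFun₂ (gellMann_completeness Λ hcard htrace horth (single k i 1)) j l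
  simp only [htr, htr_single] at hcompl
  simpa [Matrix.sum_apply, Finset.mul_sum, single_apply, and_comm, eq_comm, mul_comm,
    mul_assoc] using hcompl

end GellMann

theorem tensor_commutation_eq_gellMann_sum_general (n : ℕ) (hn : 2 ≤ n)
    (Λ : Fin (n ^ 2 - 1) → Matrix (Fin n) (Fin n) ℂ)
    (htrace : ∀ a, (Λ a).trace = 0)
    (horth : ∀ a b, (Λ a * Λ b).trace = if a = b then 2 else 0)
    (U : Matrix (Fin n × Fin n) (Fin n × Fin n) ℂ)
    (hU : ∀ a b : Fin n → ℂ,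
      U.mulVec (fun x => a x.1 * b x.2) = fun x => b x.1 * a x.2) :
    U = ((1 : ℂ) / (n : ℂ)) • ((1 : Matrix (Fin n) (Fin n) ℂ) ⊗ₖ (1 : Matrix (Fin n) (Fin n) ℂ))
        + ((1 : ℂ) / 2) • ∑ a, Λ a ⊗ₖ Λ a := by
  have : NeZero n := ⟨by omega⟩
  have hcard : Fintype.card (Fin (n ^ 2 - 1)) + 1 = Fintype.card (Fin n) ^ 2 := by
    simpa using Nat.sub_add_cancel (Nat.one_le_pow 2 n (by omega))
  ext ⟨i, j⟩ ⟨k, l⟩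
  rw [apply_eq_ite_of_mulVec_kronecker_swap U hU,
    ← gellMann_completeness_apply Λ hcard htrace horth]
  simp only [Matrix.add_apply, Matrix.smul_apply, Matrix.sum_apply, kroneckerMap_apply,
    Fintype.card_fin, smul_eq_mul, one_div]

/-- Let `n ≥ 2` and let `Λ_1, …, Λ_{n²-1}` be `n × n` complex matrices that
are Hermitian, traceless and satisfy `Tr(Λ_a Λ_b) = 2 δ_{ab}` (generalized Gell-Mann matrices).
Then the tensor commutation matrix `U_{n⊗n}` (the unique matrix `U` with `U · (a ⊗ b) = b ⊗ a`
for all `a, b ∈ ℂ^n`) satisfies `U = (1/n) Iₙ ⊗ Iₙ + (1/2) Σ_a Λ_a ⊗ Λ_a`. -/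
theorem tensor_commutation_eq_gellMann_sum (n : ℕ) (hn : 2 ≤ n)
    (Λ : Fin (n ^ 2 - 1) → Matrix (Fin n) (Fin n) ℂ)
    (hherm : ∀ a, (Λ a).IsHermitian)
    (htrace : ∀ a, (Λ a).trace = 0)
    (horth : ∀ a b, (Λ a * Λ b).trace = if a = b then 2 else 0)
    (U : Matrix (Fin n × Fin n) (Fin n × Fin n) ℂ)
    (hU : ∀ a b : Fin n → ℂ,
      U.mulVec (fun x => a x.1 * b x.2) = fun x => b x.1 * a x.2) :
    U = ((1 : ℂ) / (n : ℂ)) • ((1 : Matrix (Fin n) (Fin n) ℂ) ⊗ₖ (1 : Matrix (Fin n) (Fin n) ℂ))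
        + ((1 : ℂ) / 2) • ∑ a, Λ a ⊗ₖ Λ a :=
  tensor_commutation_eq_gellMann_sum_general n hn Λ htrace horth U hU
end
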